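/- arXiv:0711.0928 — 2 statements merged into one kernel-verified Lean document; each statement's English description precedes it below -/
import Mathlib

section
/- Lemma (Lemma 1). Suppose λ({x ∈ ℝ^d : p_ia·f_a(x)·p_aj > p_ib·f_b(x)·p_bj for all i, j ∈ {a,b}}) > 0, i.e. the set where the four inequalities p_aa f_a(x) p_aa > p_ab f_b(x) p_ba, p_aa f_a(x) p_ab > p_ab f_b(x) p_bb, p_ba f_a(x) p_aa > p_bb f_b(x) p_ba, and p_ba f_a(x) p_ab > p_bb f_b(x) p_bb all hold has positive λ-measure. Then almost surely with respect to the law of (X_i)_{i≥1}, the set {u ≥ 1 : X_u is a strong a-node of (X_1,…,X_u)} is infinite. -/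
open MeasureTheory

namespace TwoStateHMM

/-- Parameters of a two-state hidden Markov model: strictly positive transition
probabilities `paa, pab, pba, pbb` with row sums one, the (unique) stationary initial
distribution `(pia, pib)`, and emission densities `fa, fb` with respect to a σ-finite
measure `lam` on `ℝ^d`, such that the emission distributions differ. -/
structure HMMParams (d : ℕ) where
  paa : ℝ
  pab : ℝ
  pba : ℝ
  pbb : ℝ
  pia : ℝ
  pib : ℝ
  fa : (Fin d → ℝ) → ℝ
  fb : (Fin d → ℝ) → ℝ
  lam : Measure (Fin d → ℝ)
  paa_pos : 0 < paa
  pab_pos : 0 < pab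
  pba_pos : 0 < pba
  pbb_pos : 0 < pbb
  rowa : paa + pab = 1
  rowb : pba + pbb = 1
  pia_pos : 0 < pia
  pib_pos : 0 < pib
  pi_sum : pia + pib = 1
  pi_stat : pia = pia * paa + pib * pba
  fa_nonneg : ∀ x, 0 ≤ fa x
  fb_nonneg : ∀ x, 0 ≤ fb x
  fa_meas : Measurable fa
  fb_meas : Measurable fb
  lam_sigmaFinite : SigmaFinite lam
  fa_int : ∫ x, fa x ∂lam = 1
  fb_int : ∫ x, fb x ∂lam = 1
  emis_ne : 0 < lam {x | fa x ≠ fb x}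

variable {d : ℕ}

/-- Viterbi scores: `delta P x u = (δ_{u+1}(a), δ_{u+1}(b))` of the sequence
`x_1 = x 0, x_2 = x 1, …` (0-indexed time `u` corresponds to the `(u+1)`-th observation). -/
noncomputable def delta (P : HMMParams d) (x : ℕ → (Fin d → ℝ)) : ℕ → ℝ × ℝ
  | 0 => (P.pia * P.fa (x 0), P.pib * P.fb (x 0))
  | u + 1 =>
      (max ((delta P x u).1 * P.paa) ((delta P x u).2 * P.pba) * P.fa (x (u + 1)),
       max ((delta P x u).1 * P.pab) ((delta P x u).2 * P.pbb) * P.fb (x (u + 1)))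

/-- `x u` (the `(u+1)`-th observation) is a strong `a`-node:
`δ(a)·p_aa > δ(b)·p_ba` and `δ(a)·p_ab > δ(b)·p_bb`. -/
def StrongANode (P : HMMParams d) (x : ℕ → (Fin d → ℝ)) (u : ℕ) : Prop :=
  (delta P x u).2 * P.pba < (delta P x u).1 * P.paa ∧
  (delta P x u).2 * P.pbb < (delta P x u).1 * P.pab

/-- Strong `b`-node. -/
def StrongBNode (P : HMMParams d) (x : ℕ → (Fin d → ℝ)) (u : ℕ) : Prop :=
  (delta P x u).1 * P.paa < (delta P x u).2 * P.pba ∧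
  (delta P x u).1 * P.pab < (delta P x u).2 * P.pbb

/-- Strong node: strong `a`-node or strong `b`-node. -/
def StrongNode (P : HMMParams d) (x : ℕ → (Fin d → ℝ)) (u : ℕ) : Prop :=
  StrongANode P x u ∨ StrongBNode P x u

/-- Weak (not necessarily strong) `a`-node. -/
def WeakANode (P : HMMParams d) (x : ℕ → (Fin d → ℝ)) (u : ℕ) : Prop :=
  (delta P x u).2 * P.pba ≤ (delta P x u).1 * P.paa ∧
  (delta P x u).2 * P.pbb ≤ (delta P x u).1 * P.pab

/-- Weak (not necessarily strong) `b`-node. -/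
def WeakBNode (P : HMMParams d) (x : ℕ → (Fin d → ℝ)) (u : ℕ) : Prop :=
  (delta P x u).1 * P.paa ≤ (delta P x u).2 * P.pba ∧
  (delta P x u).1 * P.pab ≤ (delta P x u).2 * P.pbb

/-- Weak node: weak `a`-node or weak `b`-node. -/
def WeakNode (P : HMMParams d) (x : ℕ → (Fin d → ℝ)) (u : ℕ) : Prop :=
  WeakANode P x u ∨ WeakBNode P x u

/-- The sequence obtained by appending the block `z` after the first `m` elements of `x`. -/
def concatSeq (m : ℕ) (x z : ℕ → (Fin d → ℝ)) : ℕ → (Fin d → ℝ) :=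
  fun i => if i < m then x i else z (i - m)

/-- The block `z 0, …, z (k-1)` is a strong barrier: appended to any prefix, it
contains a strong node. -/
def IsStrongBarrier (P : HMMParams d) (k : ℕ) (z : ℕ → (Fin d → ℝ)) : Prop :=
  ∀ (m : ℕ) (x : ℕ → (Fin d → ℝ)),
    ∃ u, m ≤ u ∧ u < m + k ∧ StrongNode P (concatSeq m x z) u

/-- The block `z 0, …, z (k-1)` is a strong `a`-barrier. -/
def IsStrongABarrier (P : HMMParams d) (k : ℕ) (z : ℕ → (Fin d → ℝ)) : Prop :=
  ∀ (m : ℕ) (x : ℕ → (Fin d → ℝ)),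
    ∃ u, m ≤ u ∧ u < m + k ∧ StrongANode P (concatSeq m x z) u

/-- The block `z 0, …, z (k-1)` is a strong `b`-barrier. -/
def IsStrongBBarrier (P : HMMParams d) (k : ℕ) (z : ℕ → (Fin d → ℝ)) : Prop :=
  ∀ (m : ℕ) (x : ℕ → (Fin d → ℝ)),
    ∃ u, m ≤ u ∧ u < m + k ∧ StrongBNode P (concatSeq m x z) u

/-- Initial probabilities indexed by the hidden state (`true = a`, `false = b`). -/
def HMMParams.initP (P : HMMParams d) : Bool → ℝ := fun s => if s then P.pia else P.pib

/-- Transition probabilities indexed by the hidden states (`true = a`, `false = b`). -/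
def HMMParams.transP (P : HMMParams d) : Bool → Bool → ℝ := fun s t =>
  if s then (if t then P.paa else P.pab) else (if t then P.pba else P.pbb)

/-- Emission densities indexed by the hidden state. -/
def HMMParams.dens (P : HMMParams d) : Bool → (Fin d → ℝ) → ℝ := fun s =>
  if s then P.fa else P.fb

/-- Emission distributions `P_a = f_a·λ`, `P_b = f_b·λ`. -/
noncomputable def HMMParams.emis (P : HMMParams d) : Bool → Measure (Fin d → ℝ) := fun s =>
  P.lam.withDensity fun x => ENNReal.ofReal (P.dens s x)

/-- The likelihood `Λ_π(y_{1:n+1}; x_{1:n+1})` of the hidden path `y` of length `n+1`. -/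
noncomputable def likelihood (P : HMMParams d) (n : ℕ) (y : Fin (n + 1) → Bool)
    (x : ℕ → (Fin d → ℝ)) : ℝ :=
  P.initP (y 0) * (∏ i : Fin n, P.transP (y i.castSucc) (y i.succ)) *
    ∏ i : Fin (n + 1), P.dens (y i) (x i)

/-- `(Y, X)` is (a version of) the two-state HMM with parameters `P` on the probability
space `(Ω, μ)`: the finite-dimensional joint distributions are those of a stationary
Markov chain `Y` with the given transition probabilities, together with observations
`X` that are conditionally independent given `Y`, `X_i` having distribution `P_{Y_i}`. -/
def IsHMM (P : HMMParams d) {Ω : Type} [MeasurableSpace Ω] (μ : Measure Ω)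
    (Y : ℕ → Ω → Bool) (X : ℕ → Ω → (Fin d → ℝ)) : Prop :=
  IsProbabilityMeasure μ ∧ (∀ i, Measurable (Y i)) ∧ (∀ i, Measurable (X i)) ∧
  ∀ (n : ℕ) (y : Fin (n + 1) → Bool) (A : Fin (n + 1) → Set (Fin d → ℝ)),
    (∀ i, MeasurableSet (A i)) →
    μ {ω | ∀ i : Fin (n + 1), Y i ω = y i ∧ X i ω ∈ A i} =
      ENNReal.ofReal (P.initP (y 0) * ∏ i : Fin n, P.transP (y i.castSucc) (y i.succ)) *
        ∏ i : Fin (n + 1), P.emis (y i) (A i)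

/-! A single observation in `strongANodeSet P` forces a strong `a`-node whatever came before it,
as long as the Viterbi scores have not both collapsed to zero, which needs an earlier observation
at which `f_a` and `f_b` both vanish, a null event.
Since every transition into `a` has probability at least `r = min p_aa p_ba` and `P_a` charges
that set with some `ε > 0`, the chance of avoiding it during `n` further steps is at most
`(1 - r ε)^n`, so almost surely it is visited infinitely often. -/

open Filter
open scoped ENNReal

theorem max_mul_lt_max_mul {R : Type*} [Semiring R] [LinearOrder R] [IsStrictOrderedRing R]
    {α β L₁ L₂ R₁ R₂ : R} (hα : 0 ≤ α) (hβ : 0 ≤ β) (hαβ : 0 < α ∨ 0 < β)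
    (hL₁ : 0 ≤ L₁) (hL₂ : 0 ≤ L₂) (h₁ : L₁ < R₁) (h₂ : L₂ < R₂) :
    max (α * L₁) (β * L₂) < max (α * R₁) (β * R₂) := by
  refine max_lt ?_ ?_
  · rcases hα.eq_or_lt with rfl | hα'
    · have hβ' : 0 < β := hαβ.resolve_left (lt_irrefl 0)
      exact lt_max_of_lt_right (by rw [zero_mul]; exact mul_pos hβ' (hL₂.trans_lt h₂))
    · exact lt_max_of_lt_left (mul_lt_mul_of_pos_left h₁ hα')
  · rcases hβ.eq_or_lt with rfl | hβ'
    · have hα' : 0 < α := hαβ.resolve_right (lt_irrefl 0)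
      exact lt_max_of_lt_left (by rw [zero_mul]; exact mul_pos hα' (hL₁.trans_lt h₁))
    · exact lt_max_of_lt_right (mul_lt_mul_of_pos_left h₂ hβ')

section Viterbi

variable (P : HMMParams d) (x : ℕ → (Fin d → ℝ))

def strongANodeSet : Set (Fin d → ℝ) :=
  {y | P.pab * P.fb y * P.pba < P.paa * P.fa y * P.paa ∧
    P.pab * P.fb y * P.pbb < P.paa * P.fa y * P.pab ∧
    P.pbb * P.fb y * P.pba < P.pba * P.fa y * P.paa ∧
    P.pbb * P.fb y * P.pbb < P.pba * P.fa y * P.pab}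

theorem measurableSet_strongANodeSet : MeasurableSet (strongANodeSet P) := by
  have hfa := P.fa_meas
  have hfb := P.fb_meas
  simp only [strongANodeSet, Set.ofPred_and]
  refine ((measurableSet_lt ?_ ?_).inter ((measurableSet_lt ?_ ?_).inter
    ((measurableSet_lt ?_ ?_).inter (measurableSet_lt ?_ ?_)))) <;> fun_prop

theorem fa_pos_of_mem_strongANodeSet {y : Fin d → ℝ} (hy : y ∈ strongANodeSet P) :
    0 < P.fa y := by
  have hlhs : 0 ≤ P.pab * P.fb y * P.pba :=
    mul_nonneg (mul_nonneg P.pab_pos.le (P.fb_nonneg y)) P.pba_pos.le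
  have hprod : 0 < P.paa * P.fa y * P.paa := hlhs.trans_lt hy.1
  exact pos_of_mul_pos_right (pos_of_mul_pos_left hprod P.paa_pos.le) P.paa_pos.le

theorem delta_nonneg (u : ℕ) : 0 ≤ (delta P x u).1 ∧ 0 ≤ (delta P x u).2 := by
  induction u with
  | zero =>
    exact ⟨mul_nonneg P.pia_pos.le (P.fa_nonneg _), mul_nonneg P.pib_pos.le (P.fb_nonneg _)⟩
  | succ u ih =>
    exact ⟨mul_nonneg (le_max_of_le_left (mul_nonneg ih.1 P.paa_pos.le)) (P.fa_nonneg _),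
      mul_nonneg (le_max_of_le_left (mul_nonneg ih.1 P.pab_pos.le)) (P.fb_nonneg _)⟩

theorem delta_pos_or (h : ∀ i, 0 < P.fa (x i) ∨ 0 < P.fb (x i)) (u : ℕ) :
    0 < (delta P x u).1 ∨ 0 < (delta P x u).2 := by
  induction u with
  | zero => exact (h 0).imp (mul_pos P.pia_pos) (mul_pos P.pib_pos)
  | succ u ih =>
    have hmax : 0 < max ((delta P x u).1 * P.paa) ((delta P x u).2 * P.pba) ∧
        0 < max ((delta P x u).1 * P.pab) ((delta P x u).2 * P.pbb) := by
      rcases ih with ih | ih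
      · exact ⟨lt_max_of_lt_left (mul_pos ih P.paa_pos),
          lt_max_of_lt_left (mul_pos ih P.pab_pos)⟩
      · exact ⟨lt_max_of_lt_right (mul_pos ih P.pba_pos),
          lt_max_of_lt_right (mul_pos ih P.pbb_pos)⟩
    exact (h (u + 1)).imp (mul_pos hmax.1) (mul_pos hmax.2)

theorem strongANode_succ_of_mem {v : ℕ} (hδ : 0 < (delta P x v).1 ∨ 0 < (delta P x v).2)
    (hx : x (v + 1) ∈ strongANodeSet P) : StrongANode P x (v + 1) := by
  obtain ⟨hα, hβ⟩ := delta_nonneg P x v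
  obtain ⟨h₁, h₂, h₃, h₄⟩ := hx
  set α := (delta P x v).1
  set β := (delta P x v).2
  have hfa := P.fa_nonneg (x (v + 1))
  have hfb := P.fb_nonneg (x (v + 1))
  -- distribute the outer factors over both `max`es, so that the four inequalities compare
  -- the `α`- and `β`-branches separately
  have expand : ∀ {p q c : ℝ} (f : ℝ), 0 ≤ f → 0 ≤ c →
      max (α * p) (β * q) * f * c = max (α * (p * f * c)) (β * (q * f * c)) := by
    intro p q c f hf hc
    rw [max_mul_of_nonneg _ _ hf, max_mul_of_nonneg _ _ hc]
    ring_nf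
  constructor
  · change max (α * P.pab) (β * P.pbb) * _ * P.pba < max (α * P.paa) (β * P.pba) * _ * P.paa
    rw [expand _ hfb P.pba_pos.le, expand _ hfa P.paa_pos.le]
    exact max_mul_lt_max_mul hα hβ hδ
      (mul_nonneg (mul_nonneg P.pab_pos.le hfb) P.pba_pos.le)
      (mul_nonneg (mul_nonneg P.pbb_pos.le hfb) P.pba_pos.le) h₁ h₃
  · change max (α * P.pab) (β * P.pbb) * _ * P.pbb < max (α * P.paa) (β * P.pba) * _ * P.pab
    rw [expand _ hfb P.pbb_pos.le, expand _ hfa P.pab_pos.le]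
    exact max_mul_lt_max_mul hα hβ hδ
      (mul_nonneg (mul_nonneg P.pab_pos.le hfb) P.pbb_pos.le)
      (mul_nonneg (mul_nonneg P.pbb_pos.le hfb) P.pbb_pos.le) h₂ h₄

end Viterbi

section Emission

variable (P : HMMParams d)

theorem measurable_dens (s : Bool) : Measurable (P.dens s) := by
  cases s
  exacts [P.fb_meas, P.fa_meas]

theorem dens_nonneg (s : Bool) (y : Fin d → ℝ) : 0 ≤ P.dens s y := by
  cases s
  exacts [P.fb_nonneg y, P.fa_nonneg y]

theorem transP_nonneg (s t : Bool) : 0 ≤ P.transP s t := by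
  cases s <;> cases t
  exacts [P.pbb_pos.le, P.pba_pos.le, P.pab_pos.le, P.paa_pos.le]

theorem transP_add_transP (s : Bool) : P.transP s true + P.transP s false = 1 := by
  cases s
  exacts [P.rowb, P.rowa]

theorem initP_nonneg (s : Bool) : 0 ≤ P.initP s := by
  cases s
  exacts [P.pib_pos.le, P.pia_pos.le]

instance isProbabilityMeasure_emis (s : Bool) : IsProbabilityMeasure (P.emis s) := by
  have hint : ∫ y, P.dens s y ∂P.lam = 1 := by
    cases s
    exacts [P.fb_int, P.fa_int]
  have hintegrable : Integrable (P.dens s) P.lam := by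
    by_contra h
    rw [integral_undef h] at hint
    exact zero_ne_one hint
  constructor
  rw [HMMParams.emis, withDensity_apply _ MeasurableSet.univ, Measure.restrict_univ,
    ← ofReal_integral_eq_lintegral_ofReal hintegrable (Eventually.of_forall (dens_nonneg P s)),
    hint, ENNReal.ofReal_one]

theorem emis_eq_zero_iff {s : Bool} {B : Set (Fin d → ℝ)} :
    P.emis s B = 0 ↔ P.lam ({y | 0 < P.dens s y} ∩ B) = 0 := by
  rw [HMMParams.emis, withDensity_apply_eq_zero (measurable_dens P s).ennreal_ofReal]
  simp only [ne_eq, ENNReal.ofReal_eq_zero, not_le]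

theorem emis_true_strongANodeSet_pos (hset : 0 < P.lam (strongANodeSet P)) :
    0 < P.emis true (strongANodeSet P) := by
  have hsub : strongANodeSet P ⊆ {y | 0 < P.dens true y} := fun y hy =>
    fa_pos_of_mem_strongANodeSet P hy
  refine pos_iff_ne_zero.2 fun h0 => hset.ne' ?_
  rwa [emis_eq_zero_iff, Set.inter_eq_right.2 hsub] at h0

/-- Whatever the current state, the next state is `a` with probability at least
`min p_aa p_ba`, and then the observation avoids `B` with probability `1 - P_a(B)`. -/
theorem sum_transP_mul_emis_compl_le {B : Set (Fin d → ℝ)} (hB : MeasurableSet B) (s : Bool) :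
    ∑ t, ENNReal.ofReal (P.transP s t) * P.emis t Bᶜ ≤
      ENNReal.ofReal (1 - min P.paa P.pba * (P.emis true).real B) := by
  set ε := (P.emis true).real B
  have hcompl : P.emis true Bᶜ = ENNReal.ofReal (1 - ε) := by
    rw [prob_compl_eq_one_sub hB, ENNReal.ofReal_sub _ measureReal_nonneg, ENNReal.ofReal_one,
      ofReal_measureReal]
  have hmin : min P.paa P.pba ≤ P.transP s true := by
    cases s
    exacts [min_le_right _ _, min_le_left _ _]
  have hε : ε ≤ 1 := measureReal_le_one
  have hε₀ : 0 ≤ ε := measureReal_nonneg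
  have hsum := transP_add_transP P s
  calc ∑ t, ENNReal.ofReal (P.transP s t) * P.emis t Bᶜ
      = ENNReal.ofReal (P.transP s true) * ENNReal.ofReal (1 - ε) +
          ENNReal.ofReal (P.transP s false) * P.emis false Bᶜ := by
        rw [Fintype.sum_bool, hcompl]
    _ ≤ ENNReal.ofReal (P.transP s true) * ENNReal.ofReal (1 - ε) +
          ENNReal.ofReal (P.transP s false) * 1 := by
        gcongr
        exact prob_le_one
    _ = ENNReal.ofReal (P.transP s true * (1 - ε) + P.transP s false) := by
        rw [mul_one, ← ENNReal.ofReal_mul (transP_nonneg P s true),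
          ← ENNReal.ofReal_add (mul_nonneg (transP_nonneg P s true) (by linarith))
            (transP_nonneg P s false)]
    _ ≤ ENNReal.ofReal (1 - min P.paa P.pba * ε) :=
        ENNReal.ofReal_le_ofReal (by nlinarith)

end Emission

section PathMass

variable (P : HMMParams d) (A : ℕ → Set (Fin d → ℝ))

noncomputable def pathWeight (n : ℕ) (y : Fin (n + 1) → Bool) : ℝ≥0∞ :=
  ENNReal.ofReal (P.initP (y 0) * ∏ i : Fin n, P.transP (y i.castSucc) (y i.succ)) *
    ∏ i : Fin (n + 1), P.emis (y i) (A i)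

noncomputable def pathMass (n : ℕ) : ℝ≥0∞ :=
  ∑ y : Fin (n + 1) → Bool, pathWeight P A n y

theorem pathWeight_snoc (n : ℕ) (z : Fin (n + 1) → Bool) (t : Bool) :
    pathWeight P A (n + 1) (Fin.snoc z t) =
      pathWeight P A n z *
        (ENNReal.ofReal (P.transP (z (Fin.last n)) t) * P.emis t (A (n + 1))) := by
  have hinit : (Fin.snoc z t : Fin (n + 2) → Bool) 0 = z 0 := by
    rw [← Fin.castSucc_zero, Fin.snoc_castSucc]
  have htrans : ∏ i : Fin (n + 1), P.transP ((Fin.snoc z t : Fin (n + 2) → Bool) i.castSucc)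
        ((Fin.snoc z t : Fin (n + 2) → Bool) i.succ) =
      (∏ i : Fin n, P.transP (z i.castSucc) (z i.succ)) * P.transP (z (Fin.last n)) t := by
    simp only [Fin.prod_univ_castSucc, Fin.snoc_castSucc, ← Fin.castSucc_succ, Fin.succ_last,
      Fin.snoc_last]
  have hemis : ∏ i : Fin (n + 2), P.emis ((Fin.snoc z t : Fin (n + 2) → Bool) i) (A i) =
      (∏ i : Fin (n + 1), P.emis (z i) (A i)) * P.emis t (A (n + 1)) := by
    simp only [Fin.prod_univ_castSucc (n := n + 1), Fin.snoc_castSucc, Fin.val_castSucc,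
      Fin.snoc_last, Fin.val_last]
  have hnonneg : 0 ≤ P.initP (z 0) * ∏ i : Fin n, P.transP (z i.castSucc) (z i.succ) :=
    mul_nonneg (initP_nonneg P _) (Finset.prod_nonneg fun i _ => transP_nonneg P _ _)
  rw [pathWeight, pathWeight, hinit, htrans, hemis, ← mul_assoc (P.initP (z 0)),
    ENNReal.ofReal_mul hnonneg]
  ring

theorem pathMass_succ_le {n : ℕ} {c : ℝ≥0∞}
    (hc : ∀ s, ∑ t, ENNReal.ofReal (P.transP s t) * P.emis t (A (n + 1)) ≤ c) :
    pathMass P A (n + 1) ≤ c * pathMass P A n := by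
  calc pathMass P A (n + 1)
      = ∑ p : Bool × (Fin (n + 1) → Bool), pathWeight P A (n + 1) (Fin.snoc p.2 p.1) :=
        ((Fin.snocEquiv fun _ => Bool).sum_comp _).symm
    _ = ∑ z : Fin (n + 1) → Bool, pathWeight P A n z *
          ∑ t, ENNReal.ofReal (P.transP (z (Fin.last n)) t) * P.emis t (A (n + 1)) := by
        rw [Fintype.sum_prod_type, Finset.sum_comm]
        simp only [pathWeight_snoc, Finset.mul_sum]
    _ ≤ ∑ z : Fin (n + 1) → Bool, pathWeight P A n z * c :=
        Finset.sum_le_sum fun z _ => mul_le_mul_right (hc _) _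
    _ = c * pathMass P A n := by
        rw [← Finset.sum_mul, mul_comm, pathMass]

end PathMass

section Observations

variable {P : HMMParams d} {Ω : Type} [MeasurableSpace Ω] {μ : Measure Ω}
  {Y : ℕ → Ω → Bool} {X : ℕ → Ω → (Fin d → ℝ)}

theorem IsHMM.measure_forall_mem (hHMM : IsHMM P μ Y X) (A : ℕ → Set (Fin d → ℝ))
    (hA : ∀ i, MeasurableSet (A i)) (n : ℕ) :
    μ {ω | ∀ i : Fin (n + 1), X i ω ∈ A i} = pathMass P A n := by
  obtain ⟨-, hY, hX, hlaw⟩ := hHMM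
  let E (y : Fin (n + 1) → Bool) : Set Ω :=
    {ω | ∀ i : Fin (n + 1), Y i ω = y i ∧ X i ω ∈ A i}
  have hunion : {ω | ∀ i : Fin (n + 1), X i ω ∈ A i} = ⋃ y, E y := by
    ext ω
    simp only [E, Set.mem_ofPred_eq, Set.mem_iUnion]
    exact ⟨fun h => ⟨fun i => Y i ω, fun i => ⟨rfl, h i⟩⟩, fun ⟨_, h⟩ i => (h i).2⟩
  have hdisj : Pairwise (Function.onFun Disjoint E) :=
    fun y y' hne => Set.disjoint_left.2 fun ω h h' =>
      hne (funext fun i => (h i).1.symm.trans (h' i).1)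
  have hmeas (y : Fin (n + 1) → Bool) : MeasurableSet (E y) := by
    simp only [E, Set.ofPred_forall]
    exact MeasurableSet.iInter fun i =>
      (hY i (measurableSet_singleton (y i))).inter (hX i (hA i))
  rw [hunion, measure_iUnion hdisj hmeas, tsum_fintype]
  exact Finset.sum_congr rfl fun y _ => hlaw n y (fun i => A i) fun i => hA i

theorem IsHMM.measure_forall_ge_mem_le (hHMM : IsHMM P μ Y X) {B : Set (Fin d → ℝ)}
    (hB : MeasurableSet B) {c : ℝ≥0∞}
    (hc : ∀ s, ∑ t, ENNReal.ofReal (P.transP s t) * P.emis t B ≤ c) (m n : ℕ) :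
    μ {ω | ∀ u, m ≤ u → X u ω ∈ B} ≤ c ^ n := by
  have := hHMM.1
  set A : ℕ → Set (Fin d → ℝ) := fun i => if i < m then Set.univ else B
  have hA (i : ℕ) : MeasurableSet (A i) := by
    dsimp only [A]
    split_ifs
    exacts [MeasurableSet.univ, hB]
  have hmass (k : ℕ) : pathMass P A (m + k) ≤ c ^ k := by
    induction k with
    | zero => simpa [← hHMM.measure_forall_mem A hA] using prob_le_one
    | succ k ih =>
      have hstep :
          ∀ s, ∑ t, ENNReal.ofReal (P.transP s t) * P.emis t (A (m + k + 1)) ≤ c := by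
        rw [show A (m + k + 1) = B from if_neg (by omega)]
        exact hc
      calc pathMass P A (m + k + 1) ≤ c * pathMass P A (m + k) := pathMass_succ_le P A hstep
        _ ≤ c * c ^ k := by gcongr
        _ = c ^ (k + 1) := (pow_succ' c k).symm
  calc μ {ω | ∀ u, m ≤ u → X u ω ∈ B}
      ≤ μ {ω | ∀ i : Fin (m + n + 1), X i ω ∈ A i} := by
        refine measure_mono fun ω hω i => ?_
        dsimp only [A]
        split_ifs with h
        exacts [Set.mem_univ _, hω i (not_lt.1 h)]
    _ = pathMass P A (m + n) := hHMM.measure_forall_mem A hA _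
    _ ≤ c ^ n := hmass n

theorem IsHMM.ae_frequently_mem (hHMM : IsHMM P μ Y X) {B : Set (Fin d → ℝ)}
    (hB : MeasurableSet B) (hpos : 0 < P.emis true B) :
    ∀ᵐ ω ∂μ, ∃ᶠ u in atTop, X u ω ∈ B := by
  set q := ENNReal.ofReal (1 - min P.paa P.pba * (P.emis true).real B)
  have hq : q < 1 :=
    ENNReal.ofReal_lt_one.2 (sub_lt_self _ (mul_pos (lt_min P.paa_pos P.pba_pos)
      (ENNReal.toReal_pos hpos.ne' (measure_ne_top _ _))))
  have hnull (m : ℕ) : μ {ω | ∀ u, m ≤ u → X u ω ∈ Bᶜ} = 0 :=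
    nonpos_iff_eq_zero.1 <| ge_of_tendsto' (ENNReal.tendsto_pow_atTop_nhds_zero_of_lt_one hq)
      (hHMM.measure_forall_ge_mem_le hB.compl (sum_transP_mul_emis_compl_le P hB) m)
  filter_upwards [ae_all_iff.2 fun m => measure_eq_zero_iff_ae_notMem.1 (hnull m)] with ω hω
  refine frequently_atTop.2 fun m => ?_
  simpa using hω m

theorem IsHMM.ae_forall_notMem (hHMM : IsHMM P μ Y X) {N : Set (Fin d → ℝ)}
    (hN : MeasurableSet N) (hnull : ∀ s, P.emis s N = 0) :
    ∀ᵐ ω ∂μ, ∀ i, X i ω ∉ N := by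
  refine ae_all_iff.2 fun i => (measure_eq_zero_iff_ae_notMem (s := X i ⁻¹' N)).1 ?_
  set A : ℕ → Set (Fin d → ℝ) := fun j => if j < i then Set.univ else N
  have hA (j : ℕ) : MeasurableSet (A j) := by
    dsimp only [A]
    split_ifs
    exacts [MeasurableSet.univ, hN]
  have hmass : pathMass P A i = 0 :=
    Finset.sum_eq_zero fun y _ => mul_eq_zero_of_right _ <|
      Finset.prod_eq_zero (Finset.mem_univ (Fin.last i)) (by simp [A, hnull])
  have hsub : X i ⁻¹' N ⊆ {ω | ∀ j : Fin (i + 1), X j ω ∈ A j} := by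
    intro ω hω j
    dsimp only [A]
    split_ifs with h
    · exact Set.mem_univ _
    · obtain rfl : j = Fin.last i := Fin.ext (by simp only [Fin.val_last]; omega)
      exact hω
  exact measure_mono_null hsub ((hHMM.measure_forall_mem A hA i).trans hmass)

theorem IsHMM.ae_dens_pos (hHMM : IsHMM P μ Y X) :
    ∀ᵐ ω ∂μ, ∀ i, 0 < P.fa (X i ω) ∨ 0 < P.fb (X i ω) := by
  set N := {y | P.fa y = 0 ∧ P.fb y = 0}
  have hN : MeasurableSet N :=
    (P.fa_meas (measurableSet_singleton 0)).inter (P.fb_meas (measurableSet_singleton 0))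
  have hnull (s : Bool) : P.emis s N = 0 := by
    refine (emis_eq_zero_iff P).2 ?_
    convert measure_empty (μ := P.lam)
    refine Set.eq_empty_of_forall_notMem fun y ⟨hpos, hfa, hfb⟩ => ?_
    cases s <;> simp_all [HMMParams.dens]
  filter_upwards [hHMM.ae_forall_notMem hN hnull] with ω hω i
  by_contra! h
  exact hω i ⟨le_antisymm h.1 (P.fa_nonneg _), le_antisymm h.2 (P.fb_nonneg _)⟩

end Observations

/-- **Lemma 1.** If the set of `x` satisfying the four inequalities
`p_ia·f_a(x)·p_aj > p_ib·f_b(x)·p_bj` (for all `i, j ∈ {a,b}`) has positive `λ`-measure,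
then almost every realization has infinitely many strong `a`-nodes. -/
theorem lemma1_strong_a_nodes {d : ℕ} (P : HMMParams d) {Ω : Type} [MeasurableSpace Ω]
    (μ : Measure Ω) (Y : ℕ → Ω → Bool) (X : ℕ → Ω → (Fin d → ℝ))
    (hHMM : IsHMM P μ Y X)
    (hset : 0 < P.lam {x |
      P.pab * P.fb x * P.pba < P.paa * P.fa x * P.paa ∧
      P.pab * P.fb x * P.pbb < P.paa * P.fa x * P.pab ∧
      P.pbb * P.fb x * P.pba < P.pba * P.fa x * P.paa ∧
      P.pbb * P.fb x * P.pbb < P.pba * P.fa x * P.pab}) :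
    ∀ᵐ ω ∂μ, {u : ℕ | StrongANode P (fun i => X i ω) u}.Infinite := by
  have hvisit := hHMM.ae_frequently_mem (measurableSet_strongANodeSet P)
    (emis_true_strongANodeSet_pos P hset)
  filter_upwards [hvisit, hHMM.ae_dens_pos] with ω hfreq hdens
  refine Nat.frequently_atTop_iff_infinite.1 <|
    (hfreq.and_eventually (eventually_ge_atTop 1)).mono fun u ⟨hu, hu₁⟩ => ?_
  obtain ⟨v, rfl⟩ : ∃ v, u = v + 1 := ⟨u - 1, by omega⟩
  exact strongANode_succ_of_mem P _ (delta_pos_or P _ hdens v) hu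
end TwoStateHMM
end

section
/- Corollary (Corollary 1). If the supports of P_a and P_b are not equal — precisely, if λ({x : f_a(x) > 0 and f_b(x) = 0}) > 0 or λ({x : f_b(x) > 0 and f_a(x) = 0}) > 0 — then almost surely with respect to the law of (X_i)_{i≥1}, the set {u ≥ 1 : X_u is a strong node of (X_1,…,X_u)} is infinite. -/
open MeasureTheory

/-! Each step of the hidden chain enters the state `s` with probability at least
`q = min (p_as, p_bs) > 0` whatever the past, so an observation lands in
`A = {f_s > 0 = f_{¬s}}` with conditional probability at least `q · P_s(A) > 0`; summing over
hidden paths bounds the probability of avoiding `A` during `n` consecutive steps by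
`(1 - q · P_s(A))^n`, and almost surely `A` is visited infinitely often. Almost surely every
observation also has positive density under some state, so the Viterbi scores never both vanish;
at an observation in `A` the score of `¬s` is then `0` while that of `s` is positive, which makes
it a strong `s`-node. -/

open scoped ENNReal
open Finset Filter

section PathSums

variable {α : Type*} [Fintype α]

theorem sum_path_mul_le_prod_range (T : α → α → ℝ≥0∞) (ι : α → ℝ≥0∞) (g : ℕ → α → ℝ≥0∞)
    (c : ℕ → ℝ≥0∞) (h0 : ∑ s, ι s * g 0 s ≤ c 0)
    (hc : ∀ j s, ∑ t, T s t * g (j + 1) t ≤ c (j + 1)) (n : ℕ) :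
    ∑ y : Fin (n + 1) → α, ι (y 0) * (∏ i : Fin n, T (y i.castSucc) (y i.succ)) *
        ∏ i : Fin (n + 1), g i (y i) ≤ ∏ j ∈ range (n + 1), c j := by
  induction n with
  | zero => rw [← (Equiv.funUnique (Fin 1) α).symm.sum_comp]; simpa using h0
  | succ n ih =>
    set w : (Fin (n + 1) → α) → ℝ≥0∞ := fun y =>
      ι (y 0) * (∏ i : Fin n, T (y i.castSucc) (y i.succ)) * ∏ i : Fin (n + 1), g i (y i)
    have hsnoc : ∀ (y : Fin (n + 1) → α) (t : α), ι (Fin.snoc (α := fun _ => α) y t 0) *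
        (∏ i : Fin (n + 1), T (Fin.snoc (α := fun _ => α) y t i.castSucc)
          (Fin.snoc (α := fun _ => α) y t i.succ)) *
        ∏ i : Fin (n + 2), g i (Fin.snoc (α := fun _ => α) y t i) =
          w y * (T (y (Fin.last n)) t * g (n + 1) t) := by
      intro y t
      rw [Fin.prod_univ_castSucc, Fin.prod_univ_castSucc (n := n + 1)]
      have h0 : Fin.snoc (α := fun _ => α) y t 0 = y 0 := Fin.snoc_castSucc (i := 0) ..
      simp only [w, h0, Fin.snoc_castSucc, Fin.snoc_last, Fin.succ_castSucc, Fin.succ_last,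
        Fin.val_castSucc, Fin.val_last]
      ring
    calc ∑ y : Fin (n + 2) → α, ι (y 0) *
            (∏ i : Fin (n + 1), T (y i.castSucc) (y i.succ)) * ∏ i : Fin (n + 2), g i (y i)
        = ∑ y, w y * ∑ t, T (y (Fin.last n)) t * g (n + 1) t := by
          rw [← (Fin.snocEquiv fun _ => α).sum_comp, Fintype.sum_prod_type_right]
          simp only [Fin.snocEquiv_apply, hsnoc, mul_sum]
      _ ≤ ∑ y, w y * c (n + 1) := by gcongr with y; exact hc n _
      _ ≤ ∏ j ∈ range (n + 2), c j := by rw [← sum_mul, prod_range_succ]; gcongr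

theorem sum_mul_le_of_stationary {T : α → α → ℝ≥0∞} {π g : α → ℝ≥0∞} {c : ℝ≥0∞}
    (hπ : ∀ t, π t = ∑ s, π s * T s t) (hπ1 : ∑ s, π s = 1)
    (hc : ∀ s, ∑ t, T s t * g t ≤ c) : ∑ t, π t * g t ≤ c :=
  calc ∑ t, π t * g t = ∑ s, π s * ∑ t, T s t * g t := by
        rw [sum_congr rfl fun t _ => by rw [hπ t]]
        simp only [sum_mul, mul_sum, mul_assoc]; exact sum_comm
    _ ≤ ∑ s, π s * c := by gcongr with s; exact hc s
    _ = c := by rw [← sum_mul, hπ1, one_mul]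

theorem sum_mul_measure_le_one {β : Type*} [MeasurableSpace β] {w : α → ℝ≥0∞}
    (hw : ∑ t, w t = 1) (ν : α → Measure β) [∀ t, IsProbabilityMeasure (ν t)] (B : Set β) :
    ∑ t, w t * ν t B ≤ 1 :=
  calc ∑ t, w t * ν t B ≤ ∑ t, w t * 1 := by gcongr; exact prob_le_one
    _ = 1 := by simp [hw]

theorem sum_mul_measure_compl_le {β : Type*} [MeasurableSpace β] {w : α → ℝ≥0∞}
    (hw : ∑ t, w t = 1) (ν : α → Measure β) [∀ t, IsProbabilityMeasure (ν t)] {A : Set β}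
    (hA : MeasurableSet A) (s : α) : ∑ t, w t * ν t Aᶜ ≤ 1 - w s * ν s A := by
  have hws : w s ≠ ∞ :=
    ne_top_of_le_ne_top ENNReal.one_ne_top (hw ▸ single_le_sum (by simp) (mem_univ s))
  refine ENNReal.le_sub_of_add_le_right (ENNReal.mul_ne_top hws (measure_ne_top _ _)) ?_
  calc ∑ t, w t * ν t Aᶜ + w s * ν s A ≤ ∑ t, w t * ν t Aᶜ + ∑ t, w t * ν t A := by
        gcongr; exact single_le_sum (f := fun t => w t * ν t A) (by simp) (mem_univ s)
    _ = 1 := by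
        simp_rw [← sum_add_distrib, ← mul_add, add_comm, prob_add_prob_compl hA, mul_one, hw]

end PathSums

namespace TwoStateHMM

variable {d : ℕ}

namespace HMMParams

variable (P : HMMParams d)

theorem transP_pos (s t : Bool) : 0 < P.transP s t := by
  cases s <;> cases t <;> simp [transP, P.paa_pos, P.pab_pos, P.pba_pos, P.pbb_pos]

theorem initP_pos (s : Bool) : 0 < P.initP s := by
  cases s <;> simp [initP, P.pia_pos, P.pib_pos]

theorem sum_transP (s : Bool) : ∑ t, P.transP s t = 1 := by
  cases s <;> simp [transP, P.rowa, P.rowb]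

theorem sum_initP : ∑ s, P.initP s = 1 := by
  simp [initP, P.pi_sum]

theorem initP_eq_sum (t : Bool) : P.initP t = ∑ s, P.initP s * P.transP s t := by
  cases t
  · simp only [Fintype.sum_bool, initP, transP, if_true, Bool.false_eq_true, if_false]
    linear_combination (-1) * P.pi_stat - P.pia * P.rowa - P.pib * P.rowb
  · simpa [initP, transP] using P.pi_stat

theorem sum_ofReal_transP (s : Bool) : ∑ t, ENNReal.ofReal (P.transP s t) = 1 := by
  rw [← ENNReal.ofReal_sum_of_nonneg fun t _ => (P.transP_pos s t).le, P.sum_transP,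
    ENNReal.ofReal_one]

theorem sum_ofReal_initP : ∑ s, ENNReal.ofReal (P.initP s) = 1 := by
  rw [← ENNReal.ofReal_sum_of_nonneg fun s _ => (P.initP_pos s).le, P.sum_initP,
    ENNReal.ofReal_one]

theorem ofReal_initP_eq_sum (t : Bool) : ENNReal.ofReal (P.initP t) =
    ∑ s, ENNReal.ofReal (P.initP s) * ENNReal.ofReal (P.transP s t) := by
  rw [P.initP_eq_sum t, ENNReal.ofReal_sum_of_nonneg fun s _ =>
    (mul_pos (P.initP_pos s) (P.transP_pos s t)).le]
  simp only [ENNReal.ofReal_mul (P.initP_pos _).le]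

theorem dens_nonneg (s : Bool) (x : Fin d → ℝ) : 0 ≤ P.dens s x := by
  cases s <;> simp [dens, P.fa_nonneg, P.fb_nonneg]

theorem measurable_dens (s : Bool) : Measurable (P.dens s) := by
  cases s <;> simp [dens, P.fa_meas, P.fb_meas]

theorem integral_dens (s : Bool) : ∫ x, P.dens s x ∂P.lam = 1 := by
  cases s <;> simp [dens, P.fa_int, P.fb_int]

instance isProbabilityMeasure_emis (s : Bool) : IsProbabilityMeasure (P.emis s) := by
  constructor
  rw [emis, withDensity_apply _ MeasurableSet.univ, Measure.restrict_univ,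
    ← ofReal_integral_eq_lintegral_ofReal (integrable_of_integral_eq_one (P.integral_dens s))
      (Eventually.of_forall (P.dens_nonneg s)), P.integral_dens s, ENNReal.ofReal_one]

theorem emis_eq_zero_iff (s : Bool) (A : Set (Fin d → ℝ)) :
    P.emis s A = 0 ↔ P.lam ({x | 0 < P.dens s x} ∩ A) = 0 := by
  simp [emis, withDensity_apply_eq_zero (P.measurable_dens s).ennreal_ofReal]

end HMMParams

section Nodes

variable (P : HMMParams d) (x : ℕ → (Fin d → ℝ))

theorem delta_fst_pos_or_snd_pos (hx : ∀ i, 0 < P.fa (x i) ∨ 0 < P.fb (x i)) (u : ℕ) :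
    0 < (delta P x u).1 ∨ 0 < (delta P x u).2 := by
  induction u with
  | zero => exact (hx 0).imp (mul_pos P.pia_pos) (mul_pos P.pib_pos)
  | succ u ih =>
    refine (hx (u + 1)).imp (mul_pos ?_) (mul_pos ?_)
    · exact ih.elim (fun h => lt_max_of_lt_left (mul_pos h P.paa_pos))
        (fun h => lt_max_of_lt_right (mul_pos h P.pba_pos))
    · exact ih.elim (fun h => lt_max_of_lt_left (mul_pos h P.pab_pos))
        (fun h => lt_max_of_lt_right (mul_pos h P.pbb_pos))

theorem delta_fst_eq_zero {u : ℕ} (h : P.fa (x u) = 0) : (delta P x u).1 = 0 := by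
  cases u <;> simp [delta, h]

theorem delta_snd_eq_zero {u : ℕ} (h : P.fb (x u) = 0) : (delta P x u).2 = 0 := by
  cases u <;> simp [delta, h]

theorem strongANode_of_fb_eq_zero (hx : ∀ i, 0 < P.fa (x i) ∨ 0 < P.fb (x i)) {u : ℕ}
    (hfb : P.fb (x u) = 0) : StrongANode P x u := by
  have hb := delta_snd_eq_zero P x hfb
  have ha : 0 < (delta P x u).1 := (delta_fst_pos_or_snd_pos P x hx u).resolve_right hb.not_gt
  simp only [StrongANode, hb, zero_mul]
  exact ⟨mul_pos ha P.paa_pos, mul_pos ha P.pab_pos⟩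

theorem strongBNode_of_fa_eq_zero (hx : ∀ i, 0 < P.fa (x i) ∨ 0 < P.fb (x i)) {u : ℕ}
    (hfa : P.fa (x u) = 0) : StrongBNode P x u := by
  have ha := delta_fst_eq_zero P x hfa
  have hb : 0 < (delta P x u).2 := (delta_fst_pos_or_snd_pos P x hx u).resolve_left ha.not_gt
  simp only [StrongBNode, ha, zero_mul]
  exact ⟨mul_pos hb P.pba_pos, mul_pos hb P.pbb_pos⟩

theorem strongNode_of_dens_eq_zero (hx : ∀ i, 0 < P.fa (x i) ∨ 0 < P.fb (x i)) {u : ℕ}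
    (s : Bool) (h : P.dens (!s) (x u) = 0) : StrongNode P x u := by
  cases s
  exacts [.inr (strongBNode_of_fa_eq_zero P x hx h), .inl (strongANode_of_fb_eq_zero P x hx h)]

end Nodes

namespace IsHMM

variable {P : HMMParams d} {Ω : Type} [MeasurableSpace Ω] {μ : Measure Ω} {Y : ℕ → Ω → Bool}
  {X : ℕ → Ω → (Fin d → ℝ)}

theorem measure_forall_mem_eq_sum (hHMM : IsHMM P μ Y X) (n : ℕ)
    {B : Fin (n + 1) → Set (Fin d → ℝ)} (hB : ∀ i, MeasurableSet (B i)) :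
    μ {ω | ∀ i : Fin (n + 1), X i ω ∈ B i} =
      ∑ y : Fin (n + 1) → Bool,
        ENNReal.ofReal (P.initP (y 0) * ∏ i : Fin n, P.transP (y i.castSucc) (y i.succ)) *
          ∏ i : Fin (n + 1), P.emis (y i) (B i) := by
  obtain ⟨-, hY, hX, hfdd⟩ := hHMM
  have hsplit : {ω | ∀ i : Fin (n + 1), X i ω ∈ B i} =
      ⋃ y : Fin (n + 1) → Bool, {ω | ∀ i : Fin (n + 1), Y i ω = y i ∧ X i ω ∈ B i} := by
    ext ω
    simp only [Set.mem_ofPred_eq, Set.mem_iUnion]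
    exact ⟨fun h => ⟨fun i => Y i ω, fun i => ⟨rfl, h i⟩⟩, fun ⟨y, hy⟩ i => (hy i).2⟩
  rw [hsplit, measure_iUnion, tsum_fintype]
  · exact sum_congr rfl fun y _ => hfdd n y B hB
  · intro y y' hne
    refine Set.disjoint_left.2 fun ω h h' => hne (funext fun i => (h i).1.symm.trans (h' i).1)
  · intro y
    simp only [Set.ofPred_forall]
    exact .iInter fun i => (measurableSet_eq_fun (hY i) measurable_const).inter (hX i (hB i))

theorem measure_forall_mem_le_prod (hHMM : IsHMM P μ Y X) {B : ℕ → Set (Fin d → ℝ)}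
    (hB : ∀ j, MeasurableSet (B j)) {c : ℕ → ℝ≥0∞}
    (hc : ∀ j s, ∑ t, ENNReal.ofReal (P.transP s t) * P.emis t (B j) ≤ c j) (n : ℕ) :
    μ {ω | ∀ i : Fin (n + 1), X i ω ∈ B i} ≤ ∏ j ∈ range (n + 1), c j := by
  rw [hHMM.measure_forall_mem_eq_sum n fun i => hB i]
  simp only [ENNReal.ofReal_mul (P.initP_pos _).le,
    ENNReal.ofReal_prod_of_nonneg fun i _ => (P.transP_pos _ _).le]
  exact sum_path_mul_le_prod_range _ _ (fun j s => P.emis s (B j)) c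
    (sum_mul_le_of_stationary P.ofReal_initP_eq_sum P.sum_ofReal_initP (hc 0))
    (fun j => hc (j + 1)) n

theorem measure_mem_eq_zero (hHMM : IsHMM P μ Y X) {B : Set (Fin d → ℝ)} (hB : MeasurableSet B)
    (h : ∀ s, P.emis s B = 0) (i : ℕ) : μ {ω | X i ω ∈ B} = 0 := by
  let B' : ℕ → Set (Fin d → ℝ) := fun j => if j = i then B else Set.univ
  have hsub : {ω | X i ω ∈ B} ⊆ {ω | ∀ j : Fin (i + 1), X j ω ∈ B' j} := fun ω hω j => by
    by_cases hj : (j : ℕ) = i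
    · simpa [B', hj] using hω
    · simp [B', hj]
  have hc : ∀ j s, ∑ t, ENNReal.ofReal (P.transP s t) * P.emis t (B' j) ≤
      if j = i then 0 else 1 := by
    intro j s
    by_cases hj : j = i
    · simp [B', hj, h]
    · simpa [hj] using sum_mul_measure_le_one (P.sum_ofReal_transP s) P.emis (B' j)
  refine measure_mono_null hsub (le_zero_iff.1 ?_)
  refine (hHMM.measure_forall_mem_le_prod (fun j => ?_) hc i).trans_eq ?_
  · by_cases hj : j = i <;> simp [B', hj, hB]
  · exact prod_eq_zero (mem_range.2 i.lt_succ_self) (if_pos rfl)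

theorem measure_forall_ge_notMem_le_pow (hHMM : IsHMM P μ Y X) {A : Set (Fin d → ℝ)}
    (hA : MeasurableSet A) {s₀ : Bool} {q : ℝ≥0∞} (hq : ∀ s, q ≤ ENNReal.ofReal (P.transP s s₀))
    (N n : ℕ) : μ {ω | ∀ u, N ≤ u → X u ω ∉ A} ≤ (1 - q * P.emis s₀ A) ^ (n + 1) := by
  let B : ℕ → Set (Fin d → ℝ) := fun j => if N ≤ j then Aᶜ else Set.univ
  have hc : ∀ j s, ∑ t, ENNReal.ofReal (P.transP s t) * P.emis t (B j) ≤
      if N ≤ j then 1 - q * P.emis s₀ A else 1 := by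
    intro j s
    by_cases hj : N ≤ j
    · simp only [B, hj, if_true]
      exact (sum_mul_measure_compl_le (P.sum_ofReal_transP s) P.emis hA s₀).trans
        (tsub_le_tsub_left (mul_le_mul_left (hq s) _) 1)
    · simpa [hj] using sum_mul_measure_le_one (P.sum_ofReal_transP s) P.emis (B j)
  have hsub : {ω | ∀ u, N ≤ u → X u ω ∉ A} ⊆ {ω | ∀ j : Fin (N + n + 1), X j ω ∈ B j} :=
    fun ω hω j => by
      by_cases hj : N ≤ (j : ℕ)
      · simpa [B, hj] using hω j hj
      · simp [B, hj]
  refine (measure_mono hsub).trans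
    ((hHMM.measure_forall_mem_le_prod (fun j => ?_) hc _).trans_eq ?_)
  · by_cases hj : N ≤ j <;> simp [B, hj, hA.compl]
  · rw [add_assoc, prod_range_add, prod_eq_one fun j hj => if_neg (by simpa using hj),
      one_mul, prod_congr rfl fun j _ => if_pos (Nat.le_add_right N j), prod_const, card_range]

theorem ae_frequently_mem_s8 (hHMM : IsHMM P μ Y X) {A : Set (Fin d → ℝ)} (hA : MeasurableSet A)
    {s₀ : Bool} (hpos : 0 < P.emis s₀ A) : ∀ᵐ ω ∂μ, ∃ᶠ u in atTop, X u ω ∈ A := by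
  let q : ℝ≥0∞ := min (ENNReal.ofReal (P.transP true s₀)) (ENNReal.ofReal (P.transP false s₀))
  have hq : ∀ s, q ≤ ENNReal.ofReal (P.transP s s₀) := by
    intro s; cases s; exacts [min_le_right _ _, min_le_left _ _]
  have hq0 : q ≠ 0 :=
    (lt_min (ENNReal.ofReal_pos.2 (P.transP_pos _ _)) (ENNReal.ofReal_pos.2 (P.transP_pos _ _))).ne'
  have hr : 1 - q * P.emis s₀ A < 1 :=
    ENNReal.sub_lt_self ENNReal.one_ne_top one_ne_zero (mul_ne_zero hq0 hpos.ne')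
  have hnull : ∀ N, μ {ω | ∀ u, N ≤ u → X u ω ∉ A} = 0 := fun N => le_zero_iff.1 <|
    ge_of_tendsto' ((ENNReal.tendsto_pow_atTop_nhds_zero_of_lt_one hr).comp
      (tendsto_add_atTop_nat 1)) (hHMM.measure_forall_ge_notMem_le_pow hA hq N)
  have hae : ∀ N, ∀ᵐ ω ∂μ, ∃ u ≥ N, X u ω ∈ A := fun N => by
    rw [ae_iff]; simpa using hnull N
  filter_upwards [ae_all_iff.2 hae] with ω hω
  exact frequently_atTop.2 hω

theorem ae_forall_fa_pos_or_fb_pos (hHMM : IsHMM P μ Y X) :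
    ∀ᵐ ω ∂μ, ∀ i, 0 < P.fa (X i ω) ∨ 0 < P.fb (X i ω) := by
  let Z : Set (Fin d → ℝ) := {x | P.fa x = 0 ∧ P.fb x = 0}
  have hZ : MeasurableSet Z :=
    (P.fa_meas (measurableSet_singleton 0)).inter (P.fb_meas (measurableSet_singleton 0))
  have hemis : ∀ s, P.emis s Z = 0 := fun s => by
    refine (P.emis_eq_zero_iff s Z).2
      (measure_mono_null (fun x ⟨hpos, hfa, hfb⟩ => ?_) measure_empty)
    cases s <;> simp_all [HMMParams.dens]
  rw [ae_all_iff]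
  intro i
  rw [ae_iff]
  refine measure_mono_null (fun ω hω => ?_) (hHMM.measure_mem_eq_zero hZ hemis i)
  simp only [Set.mem_ofPred_eq, not_or, not_lt] at hω
  exact ⟨hω.1.antisymm (P.fa_nonneg _), hω.2.antisymm (P.fb_nonneg _)⟩

end IsHMM

/-- **Corollary 1.** If the supports of `P_a` and `P_b` are not equal, then almost every
realization has infinitely many strong nodes. -/
theorem corollary1_unequal_supports {d : ℕ} (P : HMMParams d) {Ω : Type}
    [MeasurableSpace Ω] (μ : Measure Ω) (Y : ℕ → Ω → Bool) (X : ℕ → Ω → (Fin d → ℝ))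
    (hHMM : IsHMM P μ Y X)
    (hsupp : 0 < P.lam {x | 0 < P.fa x ∧ P.fb x = 0} ∨
             0 < P.lam {x | 0 < P.fb x ∧ P.fa x = 0}) :
    ∀ᵐ ω ∂μ, {u : ℕ | StrongNode P (fun i => X i ω) u}.Infinite := by
  obtain ⟨s, hs⟩ : ∃ s : Bool, 0 < P.lam {x | 0 < P.dens s x ∧ P.dens (!s) x = 0} := by
    rcases hsupp with h | h
    exacts [⟨true, h⟩, ⟨false, h⟩]
  set A := {x | 0 < P.dens s x ∧ P.dens (!s) x = 0}
  have hA : MeasurableSet A := (measurableSet_lt measurable_const (P.measurable_dens s)).inter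
    (P.measurable_dens _ (measurableSet_singleton 0))
  have hpos : 0 < P.emis s A := by
    rw [pos_iff_ne_zero, Ne, P.emis_eq_zero_iff, Set.inter_eq_right.2 fun x hx => hx.1]
    exact hs.ne'
  filter_upwards [hHMM.ae_frequently_mem_s8 hA hpos, hHMM.ae_forall_fa_pos_or_fb_pos] with ω hfreq hx
  exact (Nat.frequently_atTop_iff_infinite.1 hfreq).mono fun u hu =>
    strongNode_of_dens_eq_zero P _ hx s hu.2
end TwoStateHMM
end
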